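/- arXiv:2010.01361 — 6 statements merged into one kernel-verified Lean document; each statement's English description precedes it below -/
import Mathlib

section
/- Let Γ be a finite set of firms and W : Γ × Γ → ℝ a symmetric matrix with W i j ≥ 0 for all i, j and W i i = 0 for all i. Define v(S) = (1/2) · Σ_{i ∈ S} Σ_{j ∈ S} W i j. Then the core of the physical IS game is nonempty: there exists an allocation a : Γ → ℝ such that (1) Σ_{i ∈ Γ} a i = v(Γ) (efficiency), and (2) for every coalition S ⊆ Γ, Σ_{i ∈ S} a i ≥ v(S) (coalitional rationality). -/
/-- The physical IS game has a nonempty core: there exists an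
efficient and coalitionally rational allocation. -/
theorem physical_IS_game_core_nonempty {Γ : Type*} [Fintype Γ] [DecidableEq Γ]
    (W : Γ → Γ → ℝ)
    (hsymm : ∀ i j, W i j = W j i)
    (hnonneg : ∀ i j, 0 ≤ W i j)
    (hdiag : ∀ i, W i i = 0)
    (v : Finset Γ → ℝ)
    (hv : ∀ S : Finset Γ, v S = (1 / 2) * ∑ i ∈ S, ∑ j ∈ S, W i j) :
    ∃ a : Γ → ℝ,
      (∑ i, a i) = v Finset.univ ∧
      ∀ S : Finset Γ, v S ≤ ∑ i ∈ S, a i := by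
  refine ⟨fun i => (1 / 2) * ∑ j, W i j, ?_, ?_⟩
  · rw [hv, ← Finset.mul_sum]
  · intro S
    rw [hv, ← Finset.mul_sum]
    apply mul_le_mul_of_nonneg_left _ (by norm_num)
    apply Finset.sum_le_sum
    intro i _
    exact Finset.sum_le_sum_of_subset_of_nonneg (Finset.subset_univ S)
      (fun j _ _ => hnonneg i j)
end

section
/- Let Γ be a finite set of firms with |Γ| ≥ 2 and W : Γ × Γ → ℝ a symmetric matrix with W i j ≥ 0, W i i = 0, such that the simple graph on Γ with an edge between distinct i, j iff W i j ≠ 0 is connected and v(Γ) = (1/2) · Σ_{i,j ∈ Γ} W i j > 0. Let v(S) = (1/2) · Σ_{i ∈ S} Σ_{j ∈ S} W i j, let 𝔠(i) = (|Γ| − 1)/(Σ_{j ≠ i} d(i,j)) be the closeness centrality in this graph, ι(S) = Σ_{i ∈ S} 𝔠(i), and define the aggregated IS characteristic function σ(S) = v(S)/v(Γ) + ι(S)/ι(Γ). Then the core of the IS game is nonempty: there exists an allocation a : Γ → ℝ with Σ_{i ∈ Γ} a i = σ(Γ) and, for every coalition S ⊆ Γ, Σ_{i ∈ S} a i ≥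 σ(S). -/
/-- The aggregated IS game `σ(S) = v(S)/v(Γ) + ι(S)/ι(Γ)` on an IS
graph (symmetric nonnegative loop-free weights, connected underlying simple
graph, positive total value) has a nonempty core. -/
theorem IS_game_core_nonempty {Γ : Type*} [Fintype Γ] [DecidableEq Γ]
    (hcard : 2 ≤ Fintype.card Γ)
    (W : Γ → Γ → ℝ)
    (hsymm : ∀ i j, W i j = W j i)
    (hnonneg : ∀ i j, 0 ≤ W i j)
    (hdiag : ∀ i, W i i = 0)
    (G : SimpleGraph Γ)
    (hadj : ∀ i j, G.Adj i j ↔ i ≠ j ∧ W i j ≠ 0)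
    (hconn : G.Connected)
    (v : Finset Γ → ℝ)
    (hv : ∀ S : Finset Γ, v S = (1 / 2) * ∑ i ∈ S, ∑ j ∈ S, W i j)
    (hvpos : 0 < v Finset.univ)
    (c : Γ → ℝ)
    (hc : ∀ i, c i = ((Fintype.card Γ - 1 : ℕ) : ℝ) /
      ∑ j ∈ Finset.univ.erase i, (G.dist i j : ℝ))
    (ι : Finset Γ → ℝ)
    (hι : ∀ S : Finset Γ, ι S = ∑ i ∈ S, c i)
    (σ : Finset Γ → ℝ)
    (hσ : ∀ S : Finset Γ, σ S = v S / v Finset.univ + ι S / ι Finset.univ) :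
    ∃ a : Γ → ℝ,
      (∑ i, a i) = σ Finset.univ ∧
      ∀ S : Finset Γ, σ S ≤ ∑ i ∈ S, a i := by
  refine ⟨fun i => ((1 : ℝ) / 2) * (∑ j, W i j) / v Finset.univ + c i / ι Finset.univ, ?_, ?_⟩
  · rw [hσ, hι]
    rw [Finset.sum_add_distrib, ← Finset.sum_div, ← Finset.sum_div,
      ← Finset.mul_sum, ← hv]
  · intro S
    rw [hσ, hι, Finset.sum_add_distrib, ← Finset.sum_div, ← Finset.sum_div,
      ← Finset.mul_sum]
    gcongr
    · rw [hv]
      have : ∀ i ∈ S, (∑ j ∈ S, W i j) ≤ ∑ j, W i j := by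
        intro i _
        exact Finset.sum_le_sum_of_subset_of_nonneg (Finset.subset_univ S)
          (fun j _ _ => hnonneg i j)
      have h2 := Finset.sum_le_sum this
      nlinarith
end

section
/- Let Γ be a finite set of n firms and W : Γ × Γ → ℝ a symmetric matrix with W i j ≥ 0 and W i i = 0, and let v(S) = (1/2) · Σ_{i ∈ S} Σ_{j ∈ S} W i j. Then for every firm i ∈ Γ, the Shapley value of i in the physical IS game equals half the sum of the weights of the edges incident to i: Σ_{S ⊆ Γ \ {i}} (|S|! · (n − |S| − 1)! / n!) · (v(S ∪ {i}) − v(S)) = Σ_{j ∈ Γ \ {i}} W i j / 2. -/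
private lemma natkey (m : ℕ) :
    2 * ∑ k ∈ Finset.range (m + 1), m.choose k * ((k + 1).factorial * (m - k).factorial)
      = (m + 2).factorial := by
  have h : ∀ k ∈ Finset.range (m + 1),
      m.choose k * ((k + 1).factorial * (m - k).factorial) = (k + 1) * m.factorial := by
    intro k hk
    have hk' : k ≤ m := Nat.lt_succ_iff.mp (Finset.mem_range.mp hk)
    rw [Nat.factorial_succ, ← Nat.choose_mul_factorial_mul_factorial hk']
    ring
  rw [Finset.sum_congr rfl h, ← Finset.sum_mul, ← Nat.mul_assoc]
  clear h
  have gauss : 2 * ∑ k ∈ Finset.range (m + 1), (k + 1) = (m + 1) * (m + 2) := by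
    induction m with
    | zero => decide
    | succ p ih => rw [Finset.sum_range_succ, Nat.mul_add, ih]; ring
  rw [gauss]
  show (m + 1) * (m + 2) * m.factorial = (m + 2).factorial
  rw [Nat.factorial_succ, Nat.factorial_succ]
  ring

/-- For a set `U` of cardinality `m`, the total Shapley weight over subsets `t ⊆ U`,
with coalition size `t.card + 1` in an `(m+2)`-player game, is `1/2`. -/
private lemma half_key {α : Type*} [DecidableEq α] (U : Finset α) :
    ∑ t ∈ U.powerset,
        (((t.card + 1).factorial * (U.card - t.card).factorial : ℕ) : ℝ) /
          (((U.card + 2).factorial : ℕ) : ℝ) = 1 / 2 := by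
  set m := U.card with hm
  rw [Finset.sum_powerset U (fun t =>
    (((t.card + 1).factorial * (m - t.card).factorial : ℕ) : ℝ) / (((m + 2).factorial : ℕ) : ℝ))]
  have h1 : ∀ j ∈ Finset.range (m + 1),
      (∑ t ∈ Finset.powersetCard j U,
        (((t.card + 1).factorial * (m - t.card).factorial : ℕ) : ℝ) / (((m + 2).factorial : ℕ) : ℝ))
      = (m.choose j : ℝ) * ((((j + 1).factorial * (m - j).factorial : ℕ) : ℝ) / (((m + 2).factorial : ℕ) : ℝ)) := by
    intro j hj
    rw [Finset.sum_congr rfl (fun t ht => by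
      rw [(Finset.mem_powersetCard.mp ht).2]), Finset.sum_const,
      Finset.card_powersetCard, ← hm, nsmul_eq_mul]
  rw [Finset.sum_congr rfl h1]
  have hF : (0:ℝ) < (((m + 2).factorial : ℕ) : ℝ) := by positivity
  have key : ((2 * ∑ k ∈ Finset.range (m + 1), m.choose k * ((k + 1).factorial * (m - k).factorial) : ℕ) : ℝ) = (((m + 2).factorial : ℕ) : ℝ) := by
    exact_mod_cast congrArg (Nat.cast : ℕ → ℝ) (natkey m)
  push_cast at key
  simp_rw [← mul_div_assoc]
  rw [← Finset.sum_div, div_eq_div_iff hF.ne' (by norm_num : (2:ℝ) ≠ 0)]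
  push_cast
  linarith [key]

/-- In the physical IS game, the Shapley value of firm `i` equals
half the total weight of the edges incident to `i`. -/
theorem physical_IS_game_shapley {Γ : Type*} [Fintype Γ] [DecidableEq Γ]
    (W : Γ → Γ → ℝ)
    (hsymm : ∀ i j, W i j = W j i)
    (hnonneg : ∀ i j, 0 ≤ W i j)
    (hdiag : ∀ i, W i i = 0)
    (v : Finset Γ → ℝ)
    (hv : ∀ S : Finset Γ, v S = (1 / 2) * ∑ i ∈ S, ∑ j ∈ S, W i j)
    (i : Γ) :
    (∑ S ∈ (Finset.univ.erase i).powerset,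
        ((Nat.factorial S.card * Nat.factorial (Fintype.card Γ - S.card - 1) : ℕ) : ℝ) /
          ((Nat.factorial (Fintype.card Γ) : ℕ) : ℝ) * (v (insert i S) - v S))
      = ∑ j ∈ Finset.univ.erase i, W i j / 2 := by
  classical
  set n := Fintype.card Γ with hn
  set T := Finset.univ.erase i with hTdef
  have hiT : i ∉ T := Finset.notMem_erase i _
  have hcardT : T.card = n - 1 := by
    rw [hTdef, Finset.card_erase_of_mem (Finset.mem_univ i), Finset.card_univ]
  -- Step 1: marginal contributions
  have hmarg : ∀ S ∈ T.powerset, v (insert i S) - v S = ∑ j ∈ S, W i j := by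
    intro S hS
    have hiS : i ∉ S := fun h => hiT (Finset.mem_powerset.mp hS h)
    rw [hv, hv, Finset.sum_insert hiS]
    have e1 : ∑ j ∈ insert i S, W i j = ∑ j ∈ S, W i j := by
      rw [Finset.sum_insert hiS, hdiag, zero_add]
    have e2 : ∀ a ∈ S, ∑ j ∈ insert i S, W a j = W a i + ∑ j ∈ S, W a j := fun a _ =>
      Finset.sum_insert hiS
    rw [e1, Finset.sum_congr rfl e2, Finset.sum_add_distrib]
    have e3 : ∑ a ∈ S, W a i = ∑ a ∈ S, W i a := Finset.sum_congr rfl fun a _ => hsymm a i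
    rw [e3]
    ring
  rw [Finset.sum_congr rfl (fun S hS => by rw [hmarg S hS])]
  -- Step 2: expand the inner sum over T and swap
  have step : ∀ S ∈ T.powerset,
      ((S.card.factorial * (n - S.card - 1).factorial : ℕ) : ℝ) / ((n.factorial : ℕ) : ℝ)
          * ∑ j ∈ S, W i j
        = ∑ j ∈ T, if j ∈ S then
            ((S.card.factorial * (n - S.card - 1).factorial : ℕ) : ℝ) / ((n.factorial : ℕ) : ℝ)
              * W i j else 0 := by
    intro S hS
    rw [Finset.sum_ite_mem, Finset.inter_eq_right.mpr (Finset.mem_powerset.mp hS),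
      Finset.mul_sum]
  rw [Finset.sum_congr rfl step, Finset.sum_comm]
  refine Finset.sum_congr rfl fun j hj => ?_
  -- Step 3: the per-firm coefficient sum equals 1/2
  have hkey : (∑ S ∈ T.powerset, if j ∈ S then
      ((S.card.factorial * (n - S.card - 1).factorial : ℕ) : ℝ) / ((n.factorial : ℕ) : ℝ)
      else 0) = 1 / 2 := by
    set U := T.erase j with hUdef
    have hjU : j ∉ U := Finset.notMem_erase j _
    have hcardU : U.card = n - 2 := by
      rw [hUdef, Finset.card_erase_of_mem hj, hcardT]; omega
    have hn2 : 2 ≤ n := by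
      have h1 : 1 ≤ T.card := Finset.card_pos.mpr ⟨j, hj⟩
      omega
    have hnm : n = U.card + 2 := by omega
    have hTins : T = insert j U := (Finset.insert_erase hj).symm
    rw [hTins, Finset.sum_powerset_insert hjU]
    have z1 : (∑ t ∈ U.powerset, if j ∈ t then
        ((t.card.factorial * (n - t.card - 1).factorial : ℕ) : ℝ) / ((n.factorial : ℕ) : ℝ)
        else 0) = 0 := by
      refine Finset.sum_eq_zero fun t ht => ?_
      have : j ∉ t := fun h => hjU (Finset.mem_powerset.mp ht h)
      simp [this]
    rw [z1, zero_add]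
    have z2 : ∀ t ∈ U.powerset, (if j ∈ insert j t then
        (((insert j t).card.factorial * (n - (insert j t).card - 1).factorial : ℕ) : ℝ)
          / ((n.factorial : ℕ) : ℝ) else 0)
        = (((t.card + 1).factorial * (U.card - t.card).factorial : ℕ) : ℝ)
          / (((U.card + 2).factorial : ℕ) : ℝ) := by
      intro t ht
      have hjt : j ∉ t := fun h => hjU (Finset.mem_powerset.mp ht h)
      rw [if_pos (Finset.mem_insert_self j t), Finset.card_insert_of_notMem hjt]
      have : n - (t.card + 1) - 1 = U.card - t.card := by omega
      rw [this, ← hnm]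
    rw [Finset.sum_congr rfl z2, half_key U]
  calc (∑ S ∈ T.powerset, if j ∈ S then
        ((S.card.factorial * (n - S.card - 1).factorial : ℕ) : ℝ) / ((n.factorial : ℕ) : ℝ)
          * W i j else 0)
      = (∑ S ∈ T.powerset, if j ∈ S then
        ((S.card.factorial * (n - S.card - 1).factorial : ℕ) : ℝ) / ((n.factorial : ℕ) : ℝ)
          else 0) * W i j := by
        rw [Finset.sum_mul]
        exact Finset.sum_congr rfl fun S _ => by rw [ite_mul, zero_mul]
    _ = W i j / 2 := by rw [hkey]; ring
end

section
/- Let Γ be a finite set of firms with |Γ| ≥ 2 and W : Γ × Γ → ℝ a symmetric matrix with W i j ≥ 0, W i i = 0, such that the simple graph on Γ with an edge between distinct i, j iff W i j ≠ 0 is connected and v(Γ) = (1/2) · Σ_{i,j ∈ Γ} W i j > 0. Let v(S) = (1/2) · Σ_{i ∈ S} Σ_{j ∈ S} W i j, 𝔠(i) = (|Γ| − 1)/(Σ_{j ≠ i} d(i,j)), ι(S) = Σ_{i ∈ S} 𝔠(i), and for positive reals α, β define σ(S) = α · v(S)/v(Γ) + β · ι(S)/ι(Γ). Then σ is monotone (S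 ⊆ T implies σ(S) ≤ σ(T)) and convex: σ(S ∪ T) + σ(S ∩ T) ≥ σ(S) + σ(T) for all coalitions S, T ⊆ Γ. -/
lemma expand_double_sum {Γ : Type*} [Fintype Γ] [DecidableEq Γ] (W : Γ → Γ → ℝ)
    (A : Finset Γ) :
    (∑ i ∈ A, ∑ j ∈ A, W i j)
      = ∑ i, ∑ j, (if i ∈ A then (1:ℝ) else 0) * (if j ∈ A then (1:ℝ) else 0) * W i j := by
  rw [← Finset.sum_subset (Finset.subset_univ A)]
  · refine Finset.sum_congr rfl fun i hi => ?_
    rw [← Finset.sum_subset (Finset.subset_univ A)]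
    · exact Finset.sum_congr rfl fun j hj => by simp [hi, hj]
    · intro j _ hj; simp [hj]
  · intro i _ hi; simp [hi]

/-- The generalized aggregated IS game
`σ(S) = α·v(S)/v(Γ) + β·ι(S)/ι(Γ)` (with α, β > 0) is monotone and convex. -/
theorem generalized_IS_game_monotone_convex {Γ : Type*} [Fintype Γ] [DecidableEq Γ]
    (hcard : 2 ≤ Fintype.card Γ)
    (W : Γ → Γ → ℝ)
    (hsymm : ∀ i j, W i j = W j i)
    (hnonneg : ∀ i j, 0 ≤ W i j)
    (hdiag : ∀ i, W i i = 0)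
    (G : SimpleGraph Γ)
    (hadj : ∀ i j, G.Adj i j ↔ i ≠ j ∧ W i j ≠ 0)
    (hconn : G.Connected)
    (v : Finset Γ → ℝ)
    (hv : ∀ S : Finset Γ, v S = (1 / 2) * ∑ i ∈ S, ∑ j ∈ S, W i j)
    (hvpos : 0 < v Finset.univ)
    (c : Γ → ℝ)
    (hc : ∀ i, c i = ((Fintype.card Γ - 1 : ℕ) : ℝ) /
      ∑ j ∈ Finset.univ.erase i, (G.dist i j : ℝ))
    (ι : Finset Γ → ℝ)
    (hι : ∀ S : Finset Γ, ι S = ∑ i ∈ S, c i)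
    (α β : ℝ) (hα : 0 < α) (hβ : 0 < β)
    (σ : Finset Γ → ℝ)
    (hσ : ∀ S : Finset Γ, σ S = α * (v S / v Finset.univ) + β * (ι S / ι Finset.univ)) :
    (∀ S T : Finset Γ, S ⊆ T → σ S ≤ σ T) ∧
    (∀ S T : Finset Γ, σ S + σ T ≤ σ (S ∪ T) + σ (S ∩ T)) := by
  have hcnn : ∀ i, 0 ≤ c i := by
    intro i
    rw [hc i]
    apply div_nonneg (by positivity)
    exact Finset.sum_nonneg fun j _ => by positivity
  have hιmono : ∀ S T : Finset Γ, S ⊆ T → ι S ≤ ι T := by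
    intro S T hST
    rw [hι, hι]
    exact Finset.sum_le_sum_of_subset_of_nonneg hST fun i _ _ => hcnn i
  have hιu : 0 ≤ (ι Finset.univ)⁻¹ := by
    apply inv_nonneg.mpr
    rw [hι]; exact Finset.sum_nonneg fun i _ => hcnn i
  have hvmono : ∀ S T : Finset Γ, S ⊆ T → v S ≤ v T := by
    intro S T hST
    rw [hv, hv]
    apply mul_le_mul_of_nonneg_left _ (by norm_num)
    apply le_trans (Finset.sum_le_sum fun i _ =>
      Finset.sum_le_sum_of_subset_of_nonneg hST fun j _ _ => hnonneg i j)
    exact Finset.sum_le_sum_of_subset_of_nonneg hST fun i _ _ =>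
      Finset.sum_nonneg fun j _ => hnonneg i j
  have hvsuper : ∀ S T : Finset Γ, v S + v T ≤ v (S ∪ T) + v (S ∩ T) := by
    intro S T
    rw [hv, hv, hv, hv, ← mul_add, ← mul_add]
    apply mul_le_mul_of_nonneg_left _ (by norm_num)
    rw [expand_double_sum W S, expand_double_sum W T, expand_double_sum W (S ∪ T),
      expand_double_sum W (S ∩ T), ← Finset.sum_add_distrib, ← Finset.sum_add_distrib]
    refine Finset.sum_le_sum fun i _ => ?_
    rw [← Finset.sum_add_distrib, ← Finset.sum_add_distrib]
    refine Finset.sum_le_sum fun j _ => ?_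
    rw [← add_mul, ← add_mul]
    apply mul_le_mul_of_nonneg_right _ (hnonneg i j)
    by_cases hiS : i ∈ S <;> by_cases hiT : i ∈ T <;> by_cases hjS : j ∈ S <;>
      by_cases hjT : j ∈ T <;>
      simp [hiS, hiT, hjS, hjT, Finset.mem_union, Finset.mem_inter]
  have hιadd : ∀ S T : Finset Γ, ι S + ι T = ι (S ∪ T) + ι (S ∩ T) := by
    intro S T
    rw [hι, hι, hι, hι]
    exact (Finset.sum_union_inter).symm
  constructor
  · intro S T hST
    rw [hσ, hσ]
    apply add_le_add
    · apply mul_le_mul_of_nonneg_left _ hα.le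
      exact div_le_div_of_nonneg_right (hvmono S T hST) hvpos.le
    · apply mul_le_mul_of_nonneg_left _ hβ.le
      rw [div_eq_mul_inv, div_eq_mul_inv]
      exact mul_le_mul_of_nonneg_right (hιmono S T hST) hιu
  · intro S T
    rw [hσ, hσ, hσ, hσ]
    have h1 : α * (v S / v Finset.univ) + β * (ι S / ι Finset.univ) +
        (α * (v T / v Finset.univ) + β * (ι T / ι Finset.univ))
        = α * ((v S + v T) / v Finset.univ) + β * ((ι S + ι T) / ι Finset.univ) := by
      ring
    have h2 : α * (v (S ∪ T) / v Finset.univ) + β * (ι (S ∪ T) / ι Finset.univ) +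
        (α * (v (S ∩ T) / v Finset.univ) + β * (ι (S ∩ T) / ι Finset.univ))
        = α * ((v (S ∪ T) + v (S ∩ T)) / v Finset.univ) +
          β * ((ι (S ∪ T) + ι (S ∩ T)) / ι Finset.univ) := by
      ring
    rw [h1, h2, ← hιadd S T]
    apply add_le_add_left
    apply mul_le_mul_of_nonneg_left _ hα.le
    exact div_le_div_of_nonneg_right (hvsuper S T) hvpos.le
end

section
/- Let Γ be a finite set of n firms with n ≥ 2 and W : Γ × Γ → ℝ a symmetric matrix with W i j ≥ 0, W i i = 0, such that the simple graph on Γ with an edge between distinct i, j iff W i j ≠ 0 is connected and v(Γ) = (1/2) · Σ_{i,j ∈ Γ} W i j > 0. Let v(S) = (1/2) · Σ_{i ∈ S} Σ_{j ∈ S} W i j, 𝔠(i) = (n − 1)/(Σ_{j ≠ i} d(i,j)), ι(S) = Σ_{i ∈ S} 𝔠(i), and for positive reals α, β let σ(S) = α · v(S)/v(Γ) + β · ι(S)/ι(Γ). Given τ > 0, define the cost shares T_i(σ, τ) = Φ_i(σ) · τ / σ(Γ) with Φ_i(σ) = Σ_{S ⊆ Γ \ {i}} (|S|! · (n − |S|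 − 1)! / n!) · (σ(S ∪ {i}) − σ(S)). Then the transaction cost allocation is efficient and coalitionally rational: Σ_{i ∈ Γ} T_i(σ, τ) = τ, and for every coalition S ⊆ Γ, Σ_{i ∈ S} T_i(σ, τ) ≤ τ. -/
open Finset

/-- The Shapley efficiency identity. -/
lemma shapley_eff {Γ : Type*} [Fintype Γ] [DecidableEq Γ]
    (hn : 1 ≤ Fintype.card Γ) (σ : Finset Γ → ℝ) (hσ0 : σ ∅ = 0) :
    ∑ i, ∑ S ∈ (Finset.univ.erase i).powerset,
        ((Nat.factorial S.card * Nat.factorial (Fintype.card Γ - S.card - 1) : ℕ) : ℝ) /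
          ((Nat.factorial (Fintype.card Γ) : ℕ) : ℝ) * (σ (insert i S) - σ S)
      = σ Finset.univ := by
  classical
  set n := Fintype.card Γ with hn'
  set p : ℕ → ℝ := fun k =>
    ((Nat.factorial k * Nat.factorial (n - k - 1) : ℕ) : ℝ) / ((Nat.factorial n : ℕ) : ℝ)
    with hp
  have hA : ∀ i : Γ, ∑ S ∈ (Finset.univ.erase i).powerset, p S.card * σ (insert i S)
      = ∑ T ∈ Finset.univ.powerset.filter (fun T => i ∈ T), p (T.card - 1) * σ T := by
    intro i
    refine Finset.sum_bij' (fun S _ => insert i S) (fun T _ => T.erase i) ?_ ?_ ?_ ?_ ?_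
    · intro S hS
      simp only [mem_powerset, Finset.subset_erase] at hS
      simp [hS.1.trans (Finset.subset_univ _)]
    · intro T hT
      simp only [mem_filter, mem_powerset] at hT
      simp [Finset.subset_erase, Finset.erase_subset_erase, hT.1]
    · intro S hS
      simp only [mem_powerset, Finset.subset_erase] at hS
      exact Finset.erase_insert hS.2
    · intro T hT
      simp only [mem_filter, mem_powerset] at hT
      exact Finset.insert_erase hT.2
    · intro S hS
      simp only [mem_powerset, Finset.subset_erase] at hS
      rw [Finset.card_insert_of_notMem hS.2]
      simp
  have hAswap :
      ∑ i : Γ, ∑ T ∈ Finset.univ.powerset.filter (fun T => i ∈ T), p (T.card - 1) * σ T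
      = ∑ T ∈ Finset.univ.powerset, (T.card : ℝ) * (p (T.card - 1) * σ T) := by
    rw [Finset.sum_comm' (t' := Finset.univ.powerset) (s' := fun T => T)
      (fun i T => by simp)]
    refine Finset.sum_congr rfl fun T _ => ?_
    rw [Finset.sum_const, nsmul_eq_mul]
  have hBswap :
      ∑ i : Γ, ∑ S ∈ (Finset.univ.erase i).powerset, p S.card * σ S
      = ∑ S ∈ Finset.univ.powerset, ((n - S.card : ℕ) : ℝ) * (p S.card * σ S) := by
    rw [Finset.sum_comm' (t' := Finset.univ.powerset) (s' := fun S => Finset.univ \ S)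
      (fun i S => by simp [Finset.subset_erase])]
    refine Finset.sum_congr rfl fun S hS => ?_
    rw [Finset.sum_const, nsmul_eq_mul, Finset.card_sdiff_of_subset (Finset.subset_univ S)]
    rfl
  have key : ∑ i : Γ, ∑ S ∈ (Finset.univ.erase i).powerset, p S.card * (σ (insert i S) - σ S)
      = ∑ T ∈ Finset.univ.powerset,
          ((T.card : ℝ) * p (T.card - 1) - ((n - T.card : ℕ) : ℝ) * p T.card) * σ T := by
    have : ∀ i : Γ, ∑ S ∈ (Finset.univ.erase i).powerset, p S.card * (σ (insert i S) - σ S)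
        = (∑ S ∈ (Finset.univ.erase i).powerset, p S.card * σ (insert i S))
          - ∑ S ∈ (Finset.univ.erase i).powerset, p S.card * σ S := by
      intro i; rw [← Finset.sum_sub_distrib]; exact Finset.sum_congr rfl fun S _ => by ring
    simp_rw [this]
    rw [Finset.sum_sub_distrib]
    simp_rw [hA]
    rw [hAswap, hBswap, ← Finset.sum_sub_distrib]
    exact Finset.sum_congr rfl fun T _ => by ring
  have hfac : ((Nat.factorial n : ℕ) : ℝ) ≠ 0 := by
    exact_mod_cast (Nat.factorial_pos n).ne'
  rw [key]
  rw [Finset.sum_eq_single_of_mem Finset.univ (Finset.mem_powerset_self _)]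
  · have hcard : (Finset.univ : Finset Γ).card = n := by simp [hn']
    rw [hcard]
    have h1 : n - n = 0 := Nat.sub_self n
    have h2 : (n : ℝ) * p (n - 1) = 1 := by
      have hh : n * (Nat.factorial (n - 1) * Nat.factorial (n - (n - 1) - 1)) = Nat.factorial n := by
        have e : n - (n - 1) - 1 = 0 := by omega
        rw [e, Nat.factorial_zero, Nat.mul_one, Nat.mul_factorial_pred (by omega)]
      simp only [hp]
      rw [mul_div_assoc', div_eq_one_iff_eq hfac]
      exact_mod_cast hh
    rw [h1, h2]
    push_cast
    ring
  · intro T hT hTne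
    rcases eq_or_ne T ∅ with rfl | hTe
    · rw [hσ0]; ring
    · have h1 : 1 ≤ T.card := Finset.card_pos.mpr (Finset.nonempty_of_ne_empty hTe)
      have h2 : T.card < n := by
        have := Finset.card_lt_card (lt_of_le_of_ne (Finset.mem_powerset.mp hT)
          hTne)
        simpa [hn'] using this
      have f1 : Nat.factorial T.card = T.card * Nat.factorial (T.card - 1) :=
        (Nat.mul_factorial_pred (by omega)).symm
      have f2 : Nat.factorial (n - T.card) = (n - T.card) * Nat.factorial (n - T.card - 1) :=
        (Nat.mul_factorial_pred (by omega)).symm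
      have hnat1 : T.card * (Nat.factorial (T.card - 1) * Nat.factorial (n - (T.card - 1) - 1))
          = Nat.factorial T.card * Nat.factorial (n - T.card) := by
        have e : n - (T.card - 1) - 1 = n - T.card := by omega
        rw [e, f1]; ring
      have hnat2 : (n - T.card) * (Nat.factorial T.card * Nat.factorial (n - T.card - 1))
          = Nat.factorial T.card * Nat.factorial (n - T.card) := by
        conv_rhs => rw [f2]
        ring
      have c1 : (T.card : ℝ) * p (T.card - 1)
          = ((Nat.factorial T.card * Nat.factorial (n - T.card) : ℕ) : ℝ)
            / ((Nat.factorial n : ℕ) : ℝ) := by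
        simp only [hp]
        rw [← hnat1]
        push_cast
        ring
      have c2 : ((n - T.card : ℕ) : ℝ) * p T.card
          = ((Nat.factorial T.card * Nat.factorial (n - T.card) : ℕ) : ℝ)
            / ((Nat.factorial n : ℕ) : ℝ) := by
        simp only [hp]
        rw [← hnat2]
        push_cast
        ring
      rw [c1, c2, sub_self, zero_mul]

/-- For the generalized aggregated IS game
`σ(S) = α·v(S)/v(Γ) + β·ι(S)/ι(Γ)` (α, β > 0), the Shapley-based transaction
cost allocation `T_i(σ,τ) = Φ_i(σ)·τ/σ(Γ)` is efficient and coalitionally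
rational. -/
theorem generalized_TC_allocation_fair_stable {Γ : Type*} [Fintype Γ] [DecidableEq Γ]
    (hcard : 2 ≤ Fintype.card Γ)
    (W : Γ → Γ → ℝ)
    (hsymm : ∀ i j, W i j = W j i)
    (hnonneg : ∀ i j, 0 ≤ W i j)
    (hdiag : ∀ i, W i i = 0)
    (G : SimpleGraph Γ)
    (hadj : ∀ i j, G.Adj i j ↔ i ≠ j ∧ W i j ≠ 0)
    (hconn : G.Connected)
    (v : Finset Γ → ℝ)
    (hv : ∀ S : Finset Γ, v S = (1 / 2) * ∑ i ∈ S, ∑ j ∈ S, W i j)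
    (hvpos : 0 < v Finset.univ)
    (c : Γ → ℝ)
    (hc : ∀ i, c i = ((Fintype.card Γ - 1 : ℕ) : ℝ) /
      ∑ j ∈ Finset.univ.erase i, (G.dist i j : ℝ))
    (ι : Finset Γ → ℝ)
    (hι : ∀ S : Finset Γ, ι S = ∑ i ∈ S, c i)
    (α β : ℝ) (hα : 0 < α) (hβ : 0 < β)
    (σ : Finset Γ → ℝ)
    (hσ : ∀ S : Finset Γ, σ S = α * (v S / v Finset.univ) + β * (ι S / ι Finset.univ))
    (τ : ℝ) (hτ : 0 < τ)
    (Φ : Γ → ℝ)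
    (hΦ : ∀ i, Φ i = ∑ S ∈ (Finset.univ.erase i).powerset,
        ((Nat.factorial S.card * Nat.factorial (Fintype.card Γ - S.card - 1) : ℕ) : ℝ) /
          ((Nat.factorial (Fintype.card Γ) : ℕ) : ℝ) * (σ (insert i S) - σ S))
    (T : Γ → ℝ)
    (hT : ∀ i, T i = Φ i * τ / σ Finset.univ) :
    (∑ i, T i) = τ ∧
    (∀ S : Finset Γ, (∑ i ∈ S, T i) ≤ τ) := by
  classical
  -- closeness centralities are positive
  have hcpos : ∀ i, 0 < c i := by
    intro i
    rw [hc]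
    apply div_pos
    · have : 0 < Fintype.card Γ - 1 := by omega
      exact_mod_cast this
    · apply Finset.sum_pos
      · intro j hj
        have hji : j ≠ i := Finset.ne_of_mem_erase hj
        have := hconn.pos_dist_of_ne (Ne.symm hji)
        exact_mod_cast this
      · rw [← Finset.card_pos, Finset.card_erase_of_mem (Finset.mem_univ i),
          Finset.card_univ]
        omega
  have : Nonempty Γ := Fintype.card_pos_iff.mp (by omega)
  have hιpos : 0 < ι Finset.univ := by
    rw [hι]
    exact Finset.sum_pos (fun i _ => hcpos i) Finset.univ_nonempty
  -- σ ∅ = 0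
  have hσ0 : σ ∅ = 0 := by
    rw [hσ, hv, hι]
    simp
  -- σ univ = α + β
  have hσu : σ Finset.univ = α + β := by
    rw [hσ, div_self hvpos.ne', div_self hιpos.ne']
    ring
  have hσupos : 0 < σ Finset.univ := by rw [hσu]; positivity
  -- monotonicity of σ
  have hmono : ∀ S U : Finset Γ, S ⊆ U → σ S ≤ σ U := by
    intro S U hSU
    have hvm : v S ≤ v U := by
      rw [hv, hv]
      have h1 : ∑ i ∈ S, ∑ j ∈ S, W i j ≤ ∑ i ∈ S, ∑ j ∈ U, W i j :=
        Finset.sum_le_sum fun i _ =>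
          Finset.sum_le_sum_of_subset_of_nonneg hSU fun j _ _ => hnonneg i j
      have h2 : ∑ i ∈ S, ∑ j ∈ U, W i j ≤ ∑ i ∈ U, ∑ j ∈ U, W i j :=
        Finset.sum_le_sum_of_subset_of_nonneg hSU fun i _ _ =>
          Finset.sum_nonneg fun j _ => hnonneg i j
      linarith
    have hιm : ι S ≤ ι U := by
      rw [hι, hι]
      exact Finset.sum_le_sum_of_subset_of_nonneg hSU fun i _ _ => (hcpos i).le
    rw [hσ, hσ]
    have e1 := (div_le_div_iff_of_pos_right hvpos).mpr hvm
    have e2 := (div_le_div_iff_of_pos_right hιpos).mpr hιm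
    have m1 := mul_le_mul_of_nonneg_left e1 hα.le
    have m2 := mul_le_mul_of_nonneg_left e2 hβ.le
    linarith
  -- Φ nonneg
  have hΦ0 : ∀ i, 0 ≤ Φ i := by
    intro i
    rw [hΦ]
    apply Finset.sum_nonneg
    intro S _
    apply mul_nonneg
    · positivity
    · have := hmono S (insert i S) (Finset.subset_insert i S)
      linarith
  -- T nonneg
  have hT0 : ∀ i, 0 ≤ T i := by
    intro i
    rw [hT]
    exact div_nonneg (mul_nonneg (hΦ0 i) hτ.le) hσupos.le
  -- efficiency
  have hΦsum : ∑ i, Φ i = σ Finset.univ := by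
    simp_rw [hΦ]
    exact shapley_eff (by omega) σ hσ0
  have heff : ∑ i, T i = τ := by
    simp_rw [hT]
    rw [← Finset.sum_div, ← Finset.sum_mul, hΦsum, mul_comm,
      mul_div_assoc, div_self hσupos.ne', mul_one]
  refine ⟨heff, fun S => ?_⟩
  calc ∑ i ∈ S, T i ≤ ∑ i, T i :=
        Finset.sum_le_sum_of_subset_of_nonneg (Finset.subset_univ S) fun i _ _ => hT0 i
    _ = τ := heff
end

section
/- Let Γ be a finite set of n firms and W : Γ × Γ → ℝ a symmetric matrix with W i j ≥ 0 and W i i = 0, and let v(S) = (1/2) · Σ_{i ∈ S} Σ_{j ∈ S} W i j. Then the allocation a : Γ → ℝ given by a(i) = Σ_{j ∈ Γ \ {i}} W i j / 2 (half the total weight of edges incident to i) is efficient and coalitionally rational for the physical IS game: Σ_{i ∈ Γ} a(i) = v(Γ), and for every coalition S ⊆ Γ, Σ_{i ∈ S} a(i) ≥ v(S). -/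
/-- For the physical IS game, the allocation giving each firm
half the total weight of its incident edges is efficient and coalitionally
rational. -/
theorem half_incident_weight_allocation_in_core {Γ : Type*} [Fintype Γ] [DecidableEq Γ]
    (W : Γ → Γ → ℝ)
    (hsymm : ∀ i j, W i j = W j i)
    (hnonneg : ∀ i j, 0 ≤ W i j)
    (hdiag : ∀ i, W i i = 0)
    (v : Finset Γ → ℝ)
    (hv : ∀ S : Finset Γ, v S = (1 / 2) * ∑ i ∈ S, ∑ j ∈ S, W i j)
    (a : Γ → ℝ)
    (ha : ∀ i, a i = ∑ j ∈ Finset.univ.erase i, W i j / 2) :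
    (∑ i, a i) = v Finset.univ ∧
    (∀ S : Finset Γ, v S ≤ ∑ i ∈ S, a i) := by
  have key : ∀ S : Finset Γ, ∀ i ∈ S,
      ∑ j ∈ S, W i j = ∑ j ∈ S.erase i, W i j := by
    intro S i hi
    rw [← Finset.add_sum_erase S _ hi, hdiag, zero_add]
  constructor
  · rw [hv]
    rw [Finset.mul_sum]
    refine Finset.sum_congr rfl fun i hi => ?_
    rw [ha, key Finset.univ i hi, Finset.mul_sum]
    exact Finset.sum_congr rfl fun j _ => by ring
  · intro S
    rw [hv, Finset.mul_sum]
    apply Finset.sum_le_sum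
    intro i hi
    rw [ha, key S i hi, Finset.mul_sum]
    have : ∀ j ∈ S.erase i, (1:ℝ)/2 * W i j = W i j / 2 := fun j _ => by ring
    rw [Finset.sum_congr rfl this]
    exact Finset.sum_le_sum_of_subset_of_nonneg
      (Finset.erase_subset_erase _ (Finset.subset_univ S))
      (fun j _ _ => div_nonneg (hnonneg _ _) (by norm_num))
end
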